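/- The Pareto-Lognormal density f(x) = β x^{β−1} e^{−βμ + β²τ²/2} Φᶜ((log x − μ + βτ²)/τ) is nonnegative for all x > 0 and integrates to 1 over (0, ∞). -/

import Mathlib

open MeasureTheory Filter

noncomputable def Phi (x : ℝ) : ℝ :=
  ∫ t in Set.Iic x, (Real.sqrt (2 * Real.pi))⁻¹ * Real.exp (-t ^ 2 / 2)

noncomputable def PhiC (x : ℝ) : ℝ := 1 - Phi x

noncomputable def erf (x : ℝ) : ℝ :=
  (2 / Real.sqrt Real.pi) * ∫ t in (0:ℝ)..x, Real.exp (-t ^ 2)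

noncomputable def erfc (x : ℝ) : ℝ := 1 - erf x


noncomputable def plnPDF (β μ τ x : ℝ) : ℝ :=
  β * x ^ (β - 1) * Real.exp (-β * μ + β ^ 2 * τ ^ 2 / 2) *
    PhiC ((Real.log x - μ + β * τ ^ 2) / τ)

noncomputable def plnCDF (β μ τ x : ℝ) : ℝ :=
  Phi ((Real.log x - μ) / τ) + x ^ β * Real.exp (-β * μ + β ^ 2 * τ ^ 2 / 2) *
    PhiC ((Real.log x - μ + β * τ ^ 2) / τ)

/-!
In the coordinate `z = (log x - μ) / τ` and with `c = β τ`, the distribution function `plnCDF`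
becomes `Φ(z) + exp (c z + c² / 2) Φᶜ(z + c)`. The exponential tilt identity
`exp (c z + c² / 2) φ(z + c) = φ(z)` for the standard normal density `φ` makes it an
antiderivative of `plnPDF`. It tends to `0` as `x → 0⁺` because `c > 0`, and to `1` as
`x → ∞` because the Chernoff bound `Φᶜ(t) ≤ exp (-t² / 2)` and the tilt identity give
`exp (c z + c² / 2) Φᶜ(z + c) ≤ exp (-z² / 2)`. As the density is nonnegative, its improper
integral over `(0, ∞)` is the total increase `1 - 0`.
-/

open Real Set Topology ProbabilityTheory

theorem integral_Ioi_of_hasDerivAt_of_nonneg_of_tendsto_nhdsGT {g g' : ℝ → ℝ}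
    {a l₀ l : ℝ} (h₀ : Tendsto g (𝓝[>] a) (𝓝 l₀))
    (hderiv : ∀ x ∈ Ioi a, HasDerivAt g (g' x) x)
    (g'_nonneg : ∀ x ∈ Ioi a, 0 ≤ g' x) (hg : Tendsto g atTop (𝓝 l)) :
    ∫ x in Ioi a, g' x = l - l₀ := by
  classical
  have hcont : ContinuousWithinAt (Function.update g a l₀) (Ici a) a := by
    rwa [continuousWithinAt_update_same, Ici_sdiff_left]
  have heq : ∀ x ∈ Ioi a, Function.update g a l₀ =ᶠ[𝓝 x] g := fun x hx =>
    eventually_of_mem (Ioi_mem_nhds hx) fun y hy => Function.update_of_ne hy.ne' _ _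
  have h := integral_Ioi_of_hasDerivAt_of_nonneg hcont
    (fun x hx => (hderiv x hx).congr_of_eventuallyEq (heq x hx)) g'_nonneg
    (hg.congr' <| (eventually_gt_atTop a).mono fun y hy =>
      (Function.update_of_ne hy.ne' _ _).symm)
  rwa [Function.update_self] at h

theorem hasDerivAt_integral_Iic {f : ℝ → ℝ} (hf : Integrable f) (hc : Continuous f)
    (x : ℝ) :
    HasDerivAt (fun y => ∫ t in Iic y, f t) (f x) x := by
  have h : (fun y => ∫ t in Iic y, f t) =
      fun y => (∫ t in Iic 0, f t) + ∫ t in (0 : ℝ)..y, f t := by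
    ext y
    rw [← intervalIntegral.integral_Iic_sub_Iic hf.integrableOn hf.integrableOn, add_sub_cancel]
  rw [h]
  exact (intervalIntegral.integral_hasDerivAt_right hf.intervalIntegrable
    (hc.stronglyMeasurableAtFilter _ _) hc.continuousAt).const_add _

lemma continuous_gaussianPDFReal (m : ℝ) (v : NNReal) : Continuous (gaussianPDFReal m v) := by
  unfold gaussianPDFReal; fun_prop

lemma Phi_eq_integral_gaussianPDFReal (x : ℝ) :
    Phi x = ∫ t in Iic x, gaussianPDFReal 0 1 t := by
  simp [Phi, gaussianPDFReal]

lemma Phi_eq_cdf (x : ℝ) : Phi x = cdf (gaussianReal 0 1) x := by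
  rw [cdf_eq_real, measureReal_def, gaussianReal_apply_eq_integral _ one_ne_zero,
    ENNReal.toReal_ofReal (setIntegral_nonneg measurableSet_Iic fun t _ =>
      gaussianPDFReal_nonneg _ _ _), Phi_eq_integral_gaussianPDFReal]

lemma PhiC_eq_measureReal_Ioi (x : ℝ) : PhiC x = (gaussianReal 0 1).real (Ioi x) := by
  rw [PhiC, Phi_eq_cdf, cdf_eq_real, ← compl_Iic, probReal_compl_eq_one_sub measurableSet_Iic]

lemma PhiC_nonneg (x : ℝ) : 0 ≤ PhiC x := by
  rw [PhiC_eq_measureReal_Ioi]; exact measureReal_nonneg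

lemma PhiC_le_one (x : ℝ) : PhiC x ≤ 1 := by
  rw [PhiC_eq_measureReal_Ioi]; exact measureReal_le_one

lemma PhiC_le_exp {t : ℝ} (ht : 0 ≤ t) : PhiC t ≤ exp (-t ^ 2 / 2) :=
  calc PhiC t ≤ (gaussianReal 0 1).real {x | t ≤ x} := by
        rw [PhiC_eq_measureReal_Ioi]; exact measureReal_mono Ioi_subset_Ici_self
    _ ≤ exp (-t * t) * mgf id (gaussianReal 0 1) t :=
        measure_ge_le_exp_mul_mgf t ht (integrable_exp_mul_gaussianReal t)
    _ = exp (-t ^ 2 / 2) := by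
        rw [mgf_id_gaussianReal, ← exp_add]; push_cast; ring_nf

lemma hasDerivAt_Phi (x : ℝ) : HasDerivAt Phi (gaussianPDFReal 0 1 x) x := by
  rw [funext Phi_eq_integral_gaussianPDFReal]
  exact hasDerivAt_integral_Iic (integrable_gaussianPDFReal 0 1) (continuous_gaussianPDFReal 0 1) x

lemma hasDerivAt_PhiC (x : ℝ) : HasDerivAt PhiC (-gaussianPDFReal 0 1 x) x :=
  (hasDerivAt_Phi x).const_sub 1

lemma tendsto_Phi_atTop : Tendsto Phi atTop (𝓝 1) := by
  simpa only [funext Phi_eq_cdf] using tendsto_cdf_atTop (gaussianReal 0 1)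

lemma tendsto_Phi_atBot : Tendsto Phi atBot (𝓝 0) := by
  simpa only [funext Phi_eq_cdf] using tendsto_cdf_atBot (gaussianReal 0 1)

lemma exp_mul_gaussianPDFReal_add (c z : ℝ) :
    exp (c * z + c ^ 2 / 2) * gaussianPDFReal 0 1 (z + c) = gaussianPDFReal 0 1 z := by
  simp only [gaussianPDFReal, NNReal.coe_one, mul_one, sub_zero]
  rw [mul_left_comm, ← exp_add]
  ring_nf

lemma exp_mul_PhiC_add_le (c : ℝ) {z : ℝ} (h : 0 ≤ z + c) :
    exp (c * z + c ^ 2 / 2) * PhiC (z + c) ≤ exp (-z ^ 2 / 2) :=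
  calc _ ≤ exp (c * z + c ^ 2 / 2) * exp (-(z + c) ^ 2 / 2) :=
        mul_le_mul_of_nonneg_left (PhiC_le_exp h) (exp_pos _).le
    _ = exp (-z ^ 2 / 2) := by rw [← exp_add]; ring_nf

noncomputable def stdPlnCDF (c z : ℝ) : ℝ := Phi z + exp (c * z + c ^ 2 / 2) * PhiC (z + c)

lemma hasDerivAt_stdPlnCDF (c z : ℝ) :
    HasDerivAt (stdPlnCDF c) (c * exp (c * z + c ^ 2 / 2) * PhiC (z + c)) z := by
  have hexp : HasDerivAt (fun z => exp (c * z + c ^ 2 / 2)) (exp (c * z + c ^ 2 / 2) * c) z :=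
    (((hasDerivAt_id z).const_mul c).add_const _).exp.congr_deriv (by simp)
  have htail := hexp.mul ((hasDerivAt_PhiC (z + c)).comp_add_const z c)
  refine ((hasDerivAt_Phi z).add htail).congr_deriv ?_
  rw [mul_neg, ← exp_mul_gaussianPDFReal_add c z]
  ring

lemma tendsto_stdPlnCDF_atTop (c : ℝ) : Tendsto (stdPlnCDF c) atTop (𝓝 1) := by
  have hgauss : Tendsto (fun z : ℝ => exp (-z ^ 2 / 2)) atTop (𝓝 0) := by
    simp_rw [neg_div]
    exact tendsto_exp_atBot.comp <| tendsto_neg_atTop_atBot.comp <|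
      (tendsto_pow_atTop two_ne_zero).atTop_div_const two_pos
  have htail : Tendsto (fun z => exp (c * z + c ^ 2 / 2) * PhiC (z + c)) atTop (𝓝 0) :=
    squeeze_zero' (.of_forall fun z => mul_nonneg (exp_pos _).le (PhiC_nonneg _))
      ((eventually_ge_atTop (-c)).mono fun z hz => exp_mul_PhiC_add_le c (by linarith)) hgauss
  exact add_zero (1 : ℝ) ▸ tendsto_Phi_atTop.add htail

lemma tendsto_stdPlnCDF_atBot {c : ℝ} (hc : 0 < c) : Tendsto (stdPlnCDF c) atBot (𝓝 0) := by
  have hexp : Tendsto (fun z => exp (c * z + c ^ 2 / 2)) atBot (𝓝 0) :=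
    tendsto_exp_atBot.comp <| tendsto_atBot_add_const_right _ _ <|
      tendsto_id.const_mul_atBot hc
  have htail : Tendsto (fun z => exp (c * z + c ^ 2 / 2) * PhiC (z + c)) atBot (𝓝 0) :=
    squeeze_zero (fun z => mul_nonneg (exp_pos _).le (PhiC_nonneg _))
      (fun z => mul_le_of_le_one_right (exp_pos _).le (PhiC_le_one _)) hexp
  exact add_zero (0 : ℝ) ▸ tendsto_Phi_atBot.add htail

section ParetoLognormal

variable {β μ τ x : ℝ}

lemma rpow_mul_exp_eq_exp (hτ : τ ≠ 0) (hx : 0 < x) :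
    x ^ β * exp (-β * μ + β ^ 2 * τ ^ 2 / 2) =
      exp (β * τ * ((log x - μ) / τ) + (β * τ) ^ 2 / 2) := by
  rw [rpow_def_of_pos hx, ← exp_add]
  congr 1
  field_simp
  ring

lemma add_mul_sq_div (a : ℝ) (hτ : τ ≠ 0) : (a + β * τ ^ 2) / τ = a / τ + β * τ := by
  field_simp

lemma plnCDF_eq_stdPlnCDF (hτ : τ ≠ 0) (hx : 0 < x) :
    plnCDF β μ τ x = stdPlnCDF (β * τ) ((log x - μ) / τ) := by
  rw [plnCDF, stdPlnCDF, rpow_mul_exp_eq_exp hτ hx, add_mul_sq_div _ hτ]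

lemma plnPDF_nonneg (hβ : 0 ≤ β) (hx : 0 < x) : 0 ≤ plnPDF β μ τ x := by
  have := PhiC_nonneg ((log x - μ + β * τ ^ 2) / τ)
  have := rpow_nonneg hx.le (β - 1)
  unfold plnPDF
  positivity

lemma hasDerivAt_plnCDF (hτ : τ ≠ 0) (hx : 0 < x) :
    HasDerivAt (plnCDF β μ τ) (plnPDF β μ τ x) x := by
  have hz : HasDerivAt (fun y => (log y - μ) / τ) (x⁻¹ / τ) x :=
    ((hasDerivAt_log hx.ne').sub_const μ).div_const τ
  refine (((hasDerivAt_stdPlnCDF (β * τ) _).comp x hz).congr_deriv ?_).congr_of_eventuallyEq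
    (eventually_of_mem (Ioi_mem_nhds hx) fun y hy => plnCDF_eq_stdPlnCDF hτ hy)
  rw [plnPDF, add_mul_sq_div _ hτ, rpow_sub_one hx.ne', ← rpow_mul_exp_eq_exp hτ hx]
  field_simp

lemma tendsto_log_sub_div_atTop (hτ : 0 < τ) :
    Tendsto (fun x => (log x - μ) / τ) atTop atTop :=
  (tendsto_atTop_add_const_right _ _ tendsto_log_atTop).atTop_div_const hτ

lemma tendsto_log_sub_div_nhdsGT_zero (hτ : 0 < τ) :
    Tendsto (fun x => (log x - μ) / τ) (𝓝[>] 0) atBot :=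
  (tendsto_atBot_add_const_right _ _ tendsto_log_nhdsGT_zero).atBot_div_const hτ

lemma tendsto_plnCDF_atTop (hτ : 0 < τ) : Tendsto (plnCDF β μ τ) atTop (𝓝 1) :=
  ((tendsto_stdPlnCDF_atTop _).comp (tendsto_log_sub_div_atTop hτ)).congr'
    ((eventually_gt_atTop 0).mono fun _ hx => (plnCDF_eq_stdPlnCDF hτ.ne' hx).symm)

lemma tendsto_plnCDF_nhdsGT_zero (hβ : 0 < β) (hτ : 0 < τ) :
    Tendsto (plnCDF β μ τ) (𝓝[>] 0) (𝓝 0) :=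
  ((tendsto_stdPlnCDF_atBot (mul_pos hβ hτ)).comp (tendsto_log_sub_div_nhdsGT_zero hτ)).congr'
    (eventually_mem_nhdsWithin.mono fun _ hx => (plnCDF_eq_stdPlnCDF hτ.ne' hx).symm)

end ParetoLognormal

theorem plnPDF_nonneg_integral_one (β μ τ : ℝ) (hβ : 0 < β) (hτ : 0 < τ) :
    (∀ x : ℝ, 0 < x → 0 ≤ plnPDF β μ τ x) ∧
    ∫ x in Set.Ioi (0:ℝ), plnPDF β μ τ x = 1 := by
  have hpdf_nonneg : ∀ x : ℝ, 0 < x → 0 ≤ plnPDF β μ τ x := fun _ => plnPDF_nonneg hβ.le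
  refine ⟨hpdf_nonneg, ?_⟩
  rw [integral_Ioi_of_hasDerivAt_of_nonneg_of_tendsto_nhdsGT (tendsto_plnCDF_nhdsGT_zero hβ hτ)
    (fun _ hx => hasDerivAt_plnCDF hτ.ne' hx) hpdf_nonneg (tendsto_plnCDF_atTop hτ), sub_zero]
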